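/- Let n < N and for 0 ≤ i ≤ N-n set ψ_i = Σ_{j=0}^n a_{i,j}^n ψ̃_{i+j} with a_{i,j}^n = C(n,j)(i+j+⌊(n+1)/2⌋)!(N-i-j+⌊n/2⌋)!/((i+⌊(n+1)/2⌋)!(N-i+⌊n/2⌋)!). Then for n even and each 0 ≤ p ≤ n/2 - 1, ψ_i^{(p)}(0) = 0; equivalently, the inner sum Σ_{j=0}^n a_{i,j}^n c_{i+j,r} vanishes for all 0 ≤ r ≤ p, where c denotes the dual Bernstein coefficient matrix. -/

import Mathlib

open Finset

/-- The `i`-th Bernstein basis polynomial of degree `N` on `[0,1]`. -/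
noncomputable def bernstein' (N i : ℕ) : ℝ → ℝ :=
  fun x => (N.choose i : ℝ) * x ^ i * (1 - x) ^ (N - i)

/-- The coefficients of the dual Bernstein polynomials in the Bernstein basis. -/
noncomputable def dualCoeff (N i j : ℕ) : ℝ :=
  ((-1 : ℝ) ^ (i + j) / ((N.choose i : ℝ) * (N.choose j : ℝ))) *
    ∑ r ∈ range (min i j + 1),
      (2 * (r : ℝ) + 1) * ((N + r + 1).choose (N - i) : ℝ) * ((N - r).choose (N - i) : ℝ) *
        ((N + r + 1).choose (N - j) : ℝ) * ((N - r).choose (N - j) : ℝ)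

/-- The `i`-th dual Bernstein polynomial of degree `N`. -/
noncomputable def dualBernstein (N i : ℕ) : ℝ → ℝ :=
  fun x => ∑ j ∈ range (N + 1), dualCoeff N i j * bernstein' N j x

/-- The coefficients `a_{i,j}^n` of the modal basis. -/
noncomputable def modalCoeff (N n i j : ℕ) : ℝ :=
  (n.choose j : ℝ) * ((i + j + (n + 1) / 2).factorial : ℝ) * ((N - i - j + n / 2).factorial : ℝ) /
    (((i + (n + 1) / 2).factorial : ℝ) * ((N - i + n / 2).factorial : ℝ))

/-- The `i`-th modal basis function `ψ_i = ∑_{j=0}^n a_{i,j}^n ψ̃_{i+j}`. -/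
noncomputable def modalFun (N n i : ℕ) : ℝ → ℝ :=
  fun x => ∑ j ∈ range (n + 1), modalCoeff N n i j * dualBernstein N (i + j) x

/-! Write `dualCoeff N m r = ∑_{s ≤ r} w_{r,s} f_s(m)` where only `f_s = dualCoeffFactor N s`
depends on `m`. For `n = 2h` and `s < h`, the ratios of factorials in `a_{i,j}^n f_s(i+j)` are
Pochhammer polynomials in `i + j`: the product is `K (-1)^j C(n,j) P_s(i+j)` with `K` independent
of `j` and `deg P_s = 2h - 1 < n`. The `n`-th forward difference of `P_s` vanishes, so
`∑_j a_{i,j}^n c_{i+j,r} = 0` for `r < h`. These sums are the Bernstein coefficients of `ψ_i`, and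
`B_{N,k}` vanishes to order `k` at `0`, so `ψ_i^{(p)}(0)` only involves those with `k ≤ p`. -/

open Polynomial
open scoped Nat

theorem Polynomial.sum_range_neg_one_pow_mul_choose_mul_eval_add_eq_zero {R : Type*}
    [CommRing R] {P : R[X]} {n : ℕ} (hP : P.natDegree < n) (x : R) :
    ∑ j ∈ range (n + 1), (-1) ^ j * (n.choose j : R) * P.eval (x + j) = 0 := by
  have hΔ := fwdDiff_iter_eq_sum_shift (1 : R) P.eval n x
  rw [fwdDiff_iter_eq_zero_of_degree_lt hP, Pi.zero_apply] at hΔ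
  have : ∑ j ∈ range (n + 1), (-1) ^ j * (n.choose j : R) * P.eval (x + j) =
      (-1) ^ n * ∑ k ∈ range (n + 1), ((-1 : ℤ) ^ (n - k) * n.choose k) • P.eval (x + k • 1) := by
    rw [mul_sum]
    refine sum_congr rfl fun j hj => ?_
    have hjn : j ≤ n := Nat.lt_succ_iff.mp (mem_range.mp hj)
    rw [zsmul_eq_mul, nsmul_one]
    push_cast
    rw [← mul_assoc, ← mul_assoc, ← pow_add, show n + (n - j) = j + 2 * (n - j) by omega, pow_add,
      pow_mul, neg_one_sq, one_pow, mul_one]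
  rw [this, ← hΔ, mul_zero]

theorem Polynomial.iteratedDeriv_eval {𝕜 : Type*} [NontriviallyNormedField 𝕜] (Q : 𝕜[X])
    (p : ℕ) :
    iteratedDeriv p (fun x => Q.eval x) = fun x => (derivative^[p] Q).eval x := by
  induction p generalizing Q with
  | zero => simp
  | succ p ih =>
    rw [iteratedDeriv_succ', Function.iterate_succ_apply, ← ih]
    congr 1
    funext x
    exact Polynomial.deriv Q

theorem bernsteinPolynomial.iterate_derivative_sum_smul_at_0_eq_zero {R : Type*} [CommRing R]
    (N p : ℕ) (b : ℕ → R) (hb : ∀ k ≤ p, b k = 0) :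
    (derivative^[p] (∑ k ∈ range (N + 1), b k • bernsteinPolynomial R N k)).eval 0 = 0 := by
  simp only [iterate_derivative_sum, iterate_derivative_smul, eval_finsetSum, eval_smul]
  refine sum_eq_zero fun k _ => ?_
  rcases le_or_gt k p with hkp | hpk
  · rw [hb k hkp, zero_smul]
  · rw [bernsteinPolynomial.iterate_derivative_at_0_eq_zero_of_lt R N hpk, smul_zero]

-- The `m`-dependent part of `modalCoeff N (2h) i j * dualCoeffFactor N s m` for `m = i + j`
-- (see `eval_factorialRatioPoly`).
noncomputable def factorialRatioPoly (N h s : ℕ) : ℝ[X] :=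
  (ascPochhammer ℝ (h - (s + 1))).comp (X + C ((s + 2 : ℕ) : ℝ)) * descPochhammer ℝ s *
    (ascPochhammer ℝ h).comp (C ((N + 1 : ℕ) : ℝ) - X)

lemma natDegree_factorialRatioPoly_lt {N h s : ℕ} (hs : s < h) :
    (factorialRatioPoly N h s).natDegree < 2 * h := by
  have hX : (X + C ((s + 2 : ℕ) : ℝ)).natDegree = 1 := natDegree_X_add_C _
  have hX' : (C ((N + 1 : ℕ) : ℝ) - X).natDegree = 1 := by
    rw [← neg_sub, natDegree_neg, natDegree_X_sub_C]
  calc (factorialRatioPoly N h s).natDegree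
      ≤ (h - (s + 1)) * 1 + s + h * 1 := by
        refine natDegree_mul_le.trans (add_le_add (natDegree_mul_le.trans (add_le_add ?_ ?_)) ?_)
        · exact natDegree_comp_le.trans (by rw [ascPochhammer_natDegree, hX])
        · rw [descPochhammer_natDegree]
        · exact natDegree_comp_le.trans (by rw [ascPochhammer_natDegree, hX'])
    _ < 2 * h := by omega

lemma eval_factorialRatioPoly {N h s m : ℕ} (hsm : s ≤ m) (hmN : m ≤ N) (hs : s < h) :
    (factorialRatioPoly N h s).eval (m : ℝ) =
      (m + h)! * m ! * (N - m + h)! / ((m + s + 1)! * (m - s)! * (N - m)!) := by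
  have hasc₁ : ((m + s + 1)! : ℝ) * (m + s + 2).ascFactorial (h - (s + 1)) = (m + h)! := by
    have := Nat.factorial_mul_ascFactorial (m + s + 1) (h - (s + 1))
    rw [show m + s + 1 + (h - (s + 1)) = m + h by omega] at this
    exact_mod_cast this
  have hdesc : ((m - s)! : ℝ) * m.descFactorial s = m ! := by
    exact_mod_cast Nat.factorial_mul_descFactorial hsm
  have hasc₂ : ((N - m)! : ℝ) * (N - m + 1).ascFactorial h = (N - m + h)! := by
    exact_mod_cast Nat.factorial_mul_ascFactorial (N - m) h
  have heval : (factorialRatioPoly N h s).eval (m : ℝ) =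
      (m + s + 2).ascFactorial (h - (s + 1)) * m.descFactorial s * (N - m + 1).ascFactorial h := by
    simp only [factorialRatioPoly, eval_mul, eval_comp, eval_add, eval_sub, eval_X, eval_C,
      descPochhammer_eval_eq_descFactorial, ← ascPochhammer_nat_eq_natCast_ascFactorial]
    congr 3 <;> push_cast [Nat.cast_sub hmN] <;> ring
  rw [heval, ← hasc₁, ← hdesc, ← hasc₂]
  field_simp

-- The factor of the `s`-th summand of `dualCoeff N m r` that depends on `m`.
noncomputable def dualCoeffFactor (N s m : ℕ) : ℝ :=
  (-1) ^ m * (((N + s + 1).choose (N - m) : ℝ) * ((N - s).choose (N - m) : ℝ) / (N.choose m : ℝ))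

lemma dualCoeff_eq_sum_mul_dualCoeffFactor {N r : ℕ} (m : ℕ) (hr : r ≤ N) :
    dualCoeff N m r = ∑ s ∈ range (r + 1),
      (-1) ^ r * (2 * (s : ℝ) + 1) * ((N + s + 1).choose (N - r) * (N - s).choose (N - r) /
        N.choose r) * dualCoeffFactor N s m := by
  rw [dualCoeff, mul_sum]
  refine sum_subset (fun s hs => ?_) (fun s hs hs' => ?_) |>.trans (sum_congr rfl fun s _ => ?_)
  · simp only [mem_range] at hs ⊢
    omega
  · simp only [mem_range] at hs hs'
    rw [Nat.choose_eq_zero_of_lt (by omega : N - s < N - m)]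
    simp
  · rw [dualCoeffFactor, pow_add]
    ring

lemma dualCoeffFactor_eq_zero_of_lt {N s m : ℕ} (hms : m < s) (hs : s ≤ N) :
    dualCoeffFactor N s m = 0 := by
  rw [dualCoeffFactor, Nat.choose_eq_zero_of_lt (by omega : N - s < N - m)]
  simp

lemma modalCoeff_mul_dualCoeffFactor {N h i j s : ℕ} (hiN : i + 2 * h ≤ N) (hj : j ≤ 2 * h)
    (hs : s < h) :
    modalCoeff N (2 * h) i j * dualCoeffFactor N s (i + j) =
      (-1) ^ i * ((N + s + 1)! * (N - s)! / ((i + h)! * (N - i + h)! * N !)) *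
        ((-1) ^ j * (2 * h).choose j * (factorialRatioPoly N h s).eval ((i : ℝ) + j)) := by
  obtain hms | hsm := lt_or_ge (i + j) s
  · rw [dualCoeffFactor_eq_zero_of_lt hms (by omega), ← Nat.cast_add, factorialRatioPoly,
      eval_mul, eval_mul, descPochhammer_eval_eq_descFactorial, Nat.descFactorial_of_lt hms]
    simp
  set m := i + j with hm
  have hmN : m ≤ N := by omega
  rw [show (i : ℝ) + j = (m : ℕ) by push_cast [hm]; rfl, eval_factorialRatioPoly hsm hmN hs,
    modalCoeff, dualCoeffFactor, show i + j + (2 * h + 1) / 2 = m + h by omega,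
    show N - i - j + 2 * h / 2 = N - m + h by omega, show i + (2 * h + 1) / 2 = i + h by omega,
    show N - i + 2 * h / 2 = N - i + h by omega, Nat.cast_choose ℝ (by omega : N - m ≤ N + s + 1),
    Nat.cast_choose ℝ (by omega : N - m ≤ N - s), Nat.cast_choose ℝ hmN,
    show N + s + 1 - (N - m) = m + s + 1 by omega, show N - s - (N - m) = m - s by omega, hm,
    pow_add]
  field_simp

lemma sum_modalCoeff_mul_dualCoeffFactor_eq_zero {N h i s : ℕ} (hiN : i + 2 * h ≤ N)
    (hs : s < h) :
    ∑ j ∈ range (2 * h + 1), modalCoeff N (2 * h) i j * dualCoeffFactor N s (i + j) = 0 := by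
  rw [sum_congr rfl fun j hj =>
      modalCoeff_mul_dualCoeffFactor hiN (Nat.lt_succ_iff.mp (mem_range.mp hj)) hs,
    ← mul_sum, sum_range_neg_one_pow_mul_choose_mul_eval_add_eq_zero
      (natDegree_factorialRatioPoly_lt hs), mul_zero]

lemma sum_modalCoeff_mul_dualCoeff_eq_zero {N h i r : ℕ} (hiN : i + 2 * h ≤ N) (hr : r < h) :
    ∑ j ∈ range (2 * h + 1), modalCoeff N (2 * h) i j * dualCoeff N (i + j) r = 0 := by
  simp_rw [dualCoeff_eq_sum_mul_dualCoeffFactor _ (by omega : r ≤ N), mul_sum]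
  rw [sum_comm]
  refine sum_eq_zero fun s hs => ?_
  simp_rw [mul_left_comm (modalCoeff N (2 * h) i _)]
  rw [← mul_sum, sum_modalCoeff_mul_dualCoeffFactor_eq_zero hiN (by simp at hs; omega), mul_zero]

lemma bernstein'_eq_eval (N k : ℕ) :
    bernstein' N k = fun x => (bernsteinPolynomial ℝ N k).eval x := by
  funext x
  simp [bernstein', bernsteinPolynomial]

lemma modalFun_eq_eval (N n i : ℕ) :
    modalFun N n i = fun x => (∑ k ∈ range (N + 1),
      (∑ j ∈ range (n + 1), modalCoeff N n i j * dualCoeff N (i + j) k) •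
        bernsteinPolynomial ℝ N k).eval x := by
  funext x
  simp only [modalFun, dualBernstein, bernstein'_eq_eval, eval_finsetSum, eval_smul, smul_eq_mul,
    mul_sum, sum_mul]
  rw [sum_comm]
  simp_rw [mul_assoc]

theorem modal_vanishing_derivs_even (N n i p : ℕ) (hn : n < N) (hne : Even n)
    (hi : i ≤ N - n) (hp : 2 * p + 2 ≤ n) :
    iteratedDeriv p (modalFun N n i) 0 = 0 ∧
    ∀ r ≤ p, ∑ j ∈ range (n + 1), modalCoeff N n i j * dualCoeff N (i + j) r = 0 := by
  obtain ⟨h, rfl⟩ := hne.two_dvd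
  have hcoeff : ∀ r ≤ p,
      ∑ j ∈ range (2 * h + 1), modalCoeff N (2 * h) i j * dualCoeff N (i + j) r = 0 :=
    fun r hr => sum_modalCoeff_mul_dualCoeff_eq_zero (by omega) (by omega)
  refine ⟨?_, hcoeff⟩
  rw [modalFun_eq_eval, iteratedDeriv_eval]
  exact bernsteinPolynomial.iterate_derivative_sum_smul_at_0_eq_zero N p _ hcoeff
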